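/- arXiv:1408.5981 — 3 statements merged into one kernel-verified Lean document; each statement's English description precedes it below -/
import Mathlib

section
/- Forward reductions preserve erasure-level reduction: if ⟨∘⟩ρ ∥ ⟨∘⟩σ —τ→* ⟨∘⟩ρ' ∥ ⟨∘⟩σ' (a sequence of forward τ-steps with trivial pasts), then erase(ρ) ∥ erase(σ) reduces to erase(ρ') ∥ erase(σ') in the standard checkpoint-free session behaviour calculus, where each (⊕)-fused step is split into an internal-choice step followed by a communication step. -/
/-- Session behaviours with checkpoints (recursion-free fragment):
`one` is success, `ext ck br` an external choice (checkpointed when `ck = true`),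
`int ck br` an internal choice over conames (checkpointed when `ck = true`). -/
inductive SB : Type
  | one : SB
  | ext : Bool → List (ℕ × SB) → SB
  | int : Bool → List (ℕ × SB) → SB

namespace SB

/-- Duality: exchange names/conames and external/internal choices, preserving checkpoints. -/
def dual : SB → SB
  | .one => .one
  | .ext c br => .int c (br.attach.map (fun p => (p.1.1, dual p.1.2)))
  | .int c br => .ext c (br.attach.map (fun p => (p.1.1, dual p.1.2)))
decreasing_by
  all_goals
    simp_wf
    cases p with | mk v h =>
      have := List.sizeOf_lt_of_mem h
      cases v; simp_all; omega

/-- Erase all checkpoint markers. -/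
def erase : SB → SB
  | .one => .one
  | .ext _ br => .ext false (br.attach.map (fun p => (p.1.1, erase p.1.2)))
  | .int _ br => .int false (br.attach.map (fun p => (p.1.1, erase p.1.2)))
decreasing_by
  all_goals
    simp_wf
    cases p with | mk v h =>
      have := List.sizeOf_lt_of_mem h
      cases v; simp_all; omega

/-- Names heading the top-level external choice (looking through a checkpoint). -/
def sumacts : SB → Finset ℕ
  | .ext _ br => (br.map Prod.fst).toFinset
  | _ => ∅

/-- Names of the conames heading the top-level internal choice. -/
def oplusacts : SB → Finset ℕ
  | .int _ br => (br.map Prod.fst).toFinset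
  | _ => ∅

/-- Does the behaviour start with a checkpoint ▲ ? -/
def hasCk : SB → Bool
  | .ext c _ => c
  | .int c _ => c
  | .one => false

/-- σ ∈ 𝒮▲ : σ starts with a checkpoint. -/
def Ckpt (s : SB) : Prop := s.hasCk = true

/-- Checkpoint-free behaviours. -/
inductive CkFree : SB → Prop
  | one : CkFree .one
  | ext : ∀ {br}, (∀ p ∈ br, CkFree (Prod.snd p)) → CkFree (.ext false br)
  | int : ∀ {br}, (∀ p ∈ br, CkFree (Prod.snd p)) → CkFree (.int false br)

/-- Well-formed behaviours: all choices are non-empty with pairwise distinct names. -/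
inductive WF : SB → Prop
  | one : WF .one
  | ext : ∀ {c br}, br ≠ [] → (br.map Prod.fst).Nodup →
      (∀ p ∈ br, WF (Prod.snd p)) → WF (.ext c br)
  | int : ∀ {c br}, br ≠ [] → (br.map Prod.fst).Nodup →
      (∀ p ∈ br, WF (Prod.snd p)) → WF (.int c br)

end SB

/-- Action labels: names and conames. -/
inductive Lab : Type
  | name (a : ℕ)
  | coname (a : ℕ)

/-- The LTS on configurations ⟨γ⟩σ, where the past γ is `none` (= ∘) or `some` behaviour.
Rules (+), (⊕) and (▲) of the paper. -/
inductive Step : Option SB → SB → Lab → Option SB → SB → Prop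
  | ext {γ a s br} : (a, s) ∈ br → Step γ (.ext false br) (.name a) γ s
  | int {γ a s br} : (a, s) ∈ br → Step γ (.int false br) (.coname a) γ s
  | ckExt {γ a s br} : (a, s) ∈ br →
      Step γ (.ext true br) (.name a) (some (.ext true br)) s
  | ckInt {γ a s br} : (a, s) ∈ br →
      Step γ (.int true br) (.coname a) (some (.int true br)) s

/-- The function b(γ, σ): returns σ if it is checkpointed, γ otherwise. -/
def bfun (γ : Option SB) (s : SB) : Option SB := if s.hasCk then some s else γ

/-- Configurations ⟨γ⟩σ. -/
abbrev Config := Option SB × SB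

inductive PLab : Type
  | tau
  | rbk

/-- Communication reduction of client/server pairs: τ-synchronisation of dual actions
(with side condition oplusacts ⊆ sumacts of the partner) and synchronous rollback. -/
inductive PStep : Config → Config → PLab → Config → Config → Prop
  | comL {δ ρ γ σ δ' ρ' γ' σ' a} :
      Step δ ρ (.name a) δ' ρ' → Step γ σ (.coname a) γ' σ' →
      σ.oplusacts ⊆ ρ.sumacts → PStep (δ, ρ) (γ, σ) .tau (δ', ρ') (γ', σ')
  | comR {δ ρ γ σ δ' ρ' γ' σ' a} :
      Step δ ρ (.coname a) δ' ρ' → Step γ σ (.name a) γ' σ' →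
      ρ.oplusacts ⊆ σ.sumacts → PStep (δ, ρ) (γ, σ) .tau (δ', ρ') (γ', σ')
  | rbk {d ρ g σ} : PStep (some d, ρ) (some g, σ) .rbk (none, d) (none, g)

/-- The functional H whose greatest fixed point is checkpoint compliance. -/
def Hfun (R : Config → Config → Prop) (p q : Config) : Prop :=
  ((¬ ∃ p' q', PStep p q .tau p' q') →
      p.2 = .one ∧ ((p.1 = none ∧ q.1 = none) ∨
        (∃ d g, p.1 = some d ∧ q.1 = some g ∧ SB.Ckpt d ∧ SB.Ckpt g)))
  ∧ (∀ β p' q', PStep p q β p' q' → R p' q')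

/-- Checkpoint compliance ⊣▲ : the greatest fixed point of H, i.e. the union of all
checkpoint compliance relations R ⊆ H(R). -/
def CkCompl (p q : Config) : Prop :=
  ∃ R : Config → Config → Prop, (∀ x y, R x y → Hfun R x y) ∧ R p q

/-- The formal (axiomatic) system for checkpoint compliance, with judgments
Γ ⊳ ⟨δ⟩ρ ⊣≺ ⟨γ⟩σ; rules (Hyp), (Ax), (+·⊕) and (⊕·+). -/
inductive Deriv : List (Config × Config) → Config → Config → Prop
  | hyp {Γ p q} : (p, q) ∈ Γ → Deriv Γ p q
  | axNil {Γ σ} : Deriv Γ (none, .one) (none, σ)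
  | axBk {Γ d g σ} : SB.Ckpt d → SB.Ckpt g → Deriv Γ (none, d) (none, g) →
      Deriv Γ (some d, .one) (some g, σ)
  | extInt {Γ δ γ c₁ c₂ brρ brσ} :
      brσ ≠ [] →
      (∀ a sj, (a, sj) ∈ brσ → ∃ rj, (a, rj) ∈ brρ) →
      (∀ a sj rj, (a, sj) ∈ brσ → (a, rj) ∈ brρ →
        Deriv (((δ, SB.ext c₁ brρ), (γ, SB.int c₂ brσ)) :: Γ)
          (bfun δ (SB.ext c₁ brρ), rj) (bfun γ (SB.int c₂ brσ), sj)) →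
      (∀ d g, δ = some d → γ = some g →
        Deriv (((δ, SB.ext c₁ brρ), (γ, SB.int c₂ brσ)) :: Γ) (none, d) (none, g)) →
      Deriv Γ (δ, SB.ext c₁ brρ) (γ, SB.int c₂ brσ)
  | intExt {Γ δ γ c₁ c₂ brρ brσ} :
      brρ ≠ [] →
      (∀ a ri, (a, ri) ∈ brρ → ∃ si, (a, si) ∈ brσ) →
      (∀ a ri si, (a, ri) ∈ brρ → (a, si) ∈ brσ →
        Deriv (((δ, SB.int c₁ brρ), (γ, SB.ext c₂ brσ)) :: Γ)
          (bfun δ (SB.int c₁ brρ), ri) (bfun γ (SB.ext c₂ brσ), si)) →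
      (∀ d g, δ = some d → γ = some g →
        Deriv (((δ, SB.int c₁ brρ), (γ, SB.ext c₂ brσ)) :: Γ) (none, d) (none, g)) →
      Deriv Γ (δ, SB.int c₁ brρ) (γ, SB.ext c₂ brσ)

/-- Standard (checkpoint-free) session behaviours, with an explicit committed
coname prefix `pre a σ` (= ā.σ) arising after a silent internal choice. -/
inductive PB : Type
  | one : PB
  | ext : List (ℕ × PB) → PB
  | int : List (ℕ × PB) → PB
  | pre : ℕ → PB → PB

/-- Erasure of checkpointed behaviours into standard ones. -/
def SB.toPB : SB → PB
  | .one => .one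
  | .ext _ br => .ext (br.attach.map (fun p => (p.1.1, SB.toPB p.1.2)))
  | .int _ br => .int (br.attach.map (fun p => (p.1.1, SB.toPB p.1.2)))
decreasing_by
  all_goals
    simp_wf
    cases p with | mk v h =>
      have := List.sizeOf_lt_of_mem h
      cases v; simp_all; omega

/-- Standard reduction of client/server pairs: an internal choice silently commits to
a branch, then the committed coname synchronises with a matching external choice. -/
inductive SRed : PB × PB → PB × PB → Prop
  | intL {br σ a s} : (a, s) ∈ br → SRed (.int br, σ) (.pre a s, σ)
  | intR {ρ br a s} : (a, s) ∈ br → SRed (ρ, .int br) (ρ, .pre a s)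
  | comL {br a r s} : (a, r) ∈ br → SRed (.ext br, .pre a s) (r, s)
  | comR {br a r s} : (a, s) ∈ br → SRed (.pre a r, .ext br) (r, s)

/-- A pair is stuck if no standard reduction applies. -/
def StdStuck (p : PB × PB) : Prop := ¬ ∃ q, SRed p q

/-- Standard compliance ρ ⊣ σ : every stuck reduct of ρ ∥ σ has client 1. -/
def StdCompl (ρ σ : PB) : Prop :=
  ∀ p, Relation.ReflTransGen SRed (ρ, σ) p → StdStuck p → p.1 = PB.one

/-! Erasure forgets pasts and checkpoint flags, so every τ-step, checkpointed or not, is matched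
by the standard silent commitment of the internal choice followed by the synchronisation of the
committed coname; reduction sequences are then simulated step by step. -/

theorem SB.mem_toPB_branches {a : ℕ} {s : SB} {br : List (ℕ × SB)} (h : (a, s) ∈ br) :
    (a, s.toPB) ∈ br.attach.map (fun p => (p.1.1, SB.toPB p.1.2)) :=
  List.mem_map.2 ⟨⟨(a, s), h⟩, List.mem_attach _ _, rfl⟩

namespace Step

variable {δ δ' : Option SB} {ρ ρ' : SB} {a : ℕ}

theorem toPB_of_name (h : Step δ ρ (.name a) δ' ρ') :
    ∃ br, ρ.toPB = .ext br ∧ (a, ρ'.toPB) ∈ br := by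
  cases h with
  | ext h | ckExt h => exact ⟨_, by rw [SB.toPB], SB.mem_toPB_branches h⟩

theorem toPB_of_coname (h : Step δ ρ (.coname a) δ' ρ') :
    ∃ br, ρ.toPB = .int br ∧ (a, ρ'.toPB) ∈ br := by
  cases h with
  | int h | ckInt h => exact ⟨_, by rw [SB.toPB], SB.mem_toPB_branches h⟩

end Step

def erasePair (x : Config × Config) : PB × PB := (x.1.2.toPB, x.2.2.toPB)

theorem PStep.erasePair_reflTransGen {p q p' q' : Config} (h : PStep p q .tau p' q') :
    Relation.ReflTransGen SRed (erasePair (p, q)) (erasePair (p', q')) := by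
  cases h with
  | comL hρ hσ =>
    obtain ⟨brρ, hρ, ha⟩ := hρ.toPB_of_name
    obtain ⟨brσ, hσ, hb⟩ := hσ.toPB_of_coname
    simp only [erasePair, hρ, hσ]
    exact .tail (.single (SRed.intR hb)) (SRed.comL ha)
  | comR hρ hσ =>
    obtain ⟨brρ, hρ, ha⟩ := hρ.toPB_of_coname
    obtain ⟨brσ, hσ, hb⟩ := hσ.toPB_of_name
    simp only [erasePair, hρ, hσ]
    exact .tail (.single (SRed.intL ha)) (SRed.comR hb)

/-- forward τ-reductions of checkpointed pairs are simulated by the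
standard (checkpoint-free) reduction on the erased behaviours. -/
theorem tau_red_erase (ρ σ ρ' σ' : SB)
    (h : Relation.ReflTransGen
      (fun x y : Config × Config => PStep x.1 x.2 PLab.tau y.1 y.2)
      ((none, ρ), (none, σ)) ((none, ρ'), (none, σ'))) :
    Relation.ReflTransGen SRed (ρ.toPB, σ.toPB) (ρ'.toPB, σ'.toPB) :=
  Relation.ReflTransGen.lift' erasePair (fun _ _ hstep => hstep.erasePair_reflTransGen) _ _ h
end

section
/- For every finite (recursion-free) session behaviour with checkpoints ρ, ρ is checkpoint compliant with its dual: ⟨∘⟩ρ ⊣▲ ⟨∘⟩ρ̄. -/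
/-- Checkpoint compliance ⊣▲ : the greatest fixed point of H, i.e. the union of all
checkpoint compliance relations R ⊆ H(R). -/
def CkptCompl (p q : Config) : Prop :=
  ∃ R : Config → Config → Prop, (∀ x y, R x y → Hfun R x y) ∧ R p q

/-! A behaviour and its dual always offer matching actions, and after synchronising on a
branch they are again a behaviour and its dual: non-empty choices guarantee that a
synchronisation exists, distinct names force the two continuations to be dual. When the
behaviour is checkpointed both sides record it, so the recorded pasts are dual as well and
rolling back lands on a dual pair again. Hence the relation of dual pairs with empty or
checkpointed pasts is a checkpoint compliance relation. -/

namespace SB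

@[simp]
theorem dual_ext (c : Bool) (br : List (ℕ × SB)) :
    (ext c br).dual = int c (br.map fun p => (p.1, p.2.dual)) := by
  rw [dual, ← List.attach_map_val (l := br) (f := fun p => (p.1, p.2.dual))]

@[simp]
theorem dual_int (c : Bool) (br : List (ℕ × SB)) :
    (int c br).dual = ext c (br.map fun p => (p.1, p.2.dual)) := by
  rw [dual, ← List.attach_map_val (l := br) (f := fun p => (p.1, p.2.dual))]

@[simp]
theorem hasCk_dual (s : SB) : s.dual.hasCk = s.hasCk := by
  cases s <;> simp [dual, hasCk]

theorem Ckpt.dual {s : SB} (h : s.Ckpt) : s.dual.Ckpt := by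
  rwa [Ckpt, hasCk_dual]

theorem oplusacts_dual_ext (c : Bool) (br : List (ℕ × SB)) :
    (ext c br).dual.oplusacts = (ext c br).sumacts := by
  simp [oplusacts, sumacts, Function.comp_def]

theorem sumacts_dual_int (c : Bool) (br : List (ℕ × SB)) :
    (int c br).dual.sumacts = (int c br).oplusacts := by
  simp [oplusacts, sumacts, Function.comp_def]

theorem eq_of_mem_of_nodup {br : List (ℕ × SB)} (hnd : (br.map Prod.fst).Nodup) {a : ℕ}
    {s t : SB} (hs : (a, s) ∈ br) (ht : (a, t) ∈ br) : s = t :=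
  congrArg Prod.snd (List.inj_on_of_nodup_map hnd hs ht rfl)

end SB

open SB

theorem bfun_dual (δ : Option SB) (s : SB) :
    bfun (δ.map dual) s.dual = (bfun δ s).map dual := by
  unfold bfun
  rw [hasCk_dual]
  split <;> rfl

namespace Step

variable {δ δ' : Option SB} {r r' : SB} {a : ℕ}

theorem past_eq_bfun {l : Lab} (h : Step δ r l δ' r') : δ' = bfun δ r := by
  cases h <;> simp [bfun, hasCk]

theorem of_mem_ext {c : Bool} {br : List (ℕ × SB)} (h : (a, r') ∈ br) :
    ∃ δ', Step δ (.ext c br) (.name a) δ' r' := by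
  cases c
  exacts [⟨_, .ext h⟩, ⟨_, .ckExt h⟩]

theorem of_mem_int {c : Bool} {br : List (ℕ × SB)} (h : (a, r') ∈ br) :
    ∃ δ', Step δ (.int c br) (.coname a) δ' r' := by
  cases c
  exacts [⟨_, .int h⟩, ⟨_, .ckInt h⟩]

theorem exists_of_name (h : Step δ r (.name a) δ' r') :
    ∃ c br, r = .ext c br ∧ (a, r') ∈ br := by
  cases h
  exacts [⟨_, _, rfl, ‹_›⟩, ⟨_, _, rfl, ‹_›⟩]

theorem exists_of_coname (h : Step δ r (.coname a) δ' r') :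
    ∃ c br, r = .int c br ∧ (a, r') ∈ br := by
  cases h
  exacts [⟨_, _, rfl, ‹_›⟩, ⟨_, _, rfl, ‹_›⟩]

theorem exists_of_coname_dual_ext {c : Bool} {br : List (ℕ × SB)} {s : SB}
    (h : Step δ (SB.ext c br).dual (.coname a) δ' s) :
    ∃ t, (a, t) ∈ br ∧ s = t.dual := by
  obtain ⟨_, _, heq, hs⟩ := h.exists_of_coname
  rw [dual_ext, SB.int.injEq] at heq
  rw [← heq.2] at hs
  obtain ⟨⟨_, t⟩, ht, heq⟩ := List.mem_map.1 hs
  cases heq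
  exact ⟨t, ht, rfl⟩

theorem exists_of_name_dual_int {c : Bool} {br : List (ℕ × SB)} {s : SB}
    (h : Step δ (SB.int c br).dual (.name a) δ' s) :
    ∃ t, (a, t) ∈ br ∧ s = t.dual := by
  obtain ⟨_, _, heq, hs⟩ := h.exists_of_name
  rw [dual_int, SB.ext.injEq] at heq
  rw [← heq.2] at hs
  obtain ⟨⟨_, t⟩, ht, heq⟩ := List.mem_map.1 hs
  cases heq
  exact ⟨t, ht, rfl⟩

end Step

theorem PStep.exists_tau_dual {r : SB} (hr : r.WF) (hne : r ≠ .one) (δ γ : Option SB) :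
    ∃ p' q', PStep (δ, r) (γ, r.dual) .tau p' q' := by
  cases hr with
  | one => exact absurd rfl hne
  | @ext c br hbr _ _ =>
    obtain ⟨⟨a, s⟩, hs⟩ := List.exists_mem_of_ne_nil br hbr
    obtain ⟨_, hρ⟩ := Step.of_mem_ext (δ := δ) (c := c) hs
    obtain ⟨_, hσ⟩ := Step.of_mem_int (δ := γ) (c := c)
      (List.mem_map_of_mem (f := fun p => (p.1, p.2.dual)) hs)
    exact ⟨_, _, .comL hρ (dual_ext c br ▸ hσ) (oplusacts_dual_ext c br).subset⟩
  | @int c br hbr _ _ =>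
    obtain ⟨⟨a, s⟩, hs⟩ := List.exists_mem_of_ne_nil br hbr
    obtain ⟨_, hρ⟩ := Step.of_mem_int (δ := δ) (c := c) hs
    obtain ⟨_, hσ⟩ := Step.of_mem_ext (δ := γ) (c := c)
      (List.mem_map_of_mem (f := fun p => (p.1, p.2.dual)) hs)
    exact ⟨_, _, .comR hρ (dual_int c br ▸ hσ) (sumacts_dual_int c br).superset⟩

theorem PStep.exists_of_tau_dual {δ γ : Option SB} {r : SB} {p' q' : Config} (hr : r.WF)
    (h : PStep (δ, r) (γ, r.dual) .tau p' q') :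
    ∃ r', r'.WF ∧ p' = (bfun δ r, r') ∧ q' = (bfun γ r.dual, r'.dual) := by
  cases h with
  | comL hρ hσ _ =>
    obtain ⟨c, br, rfl, hr'⟩ := hρ.exists_of_name
    obtain ⟨t, ht, rfl⟩ := hσ.exists_of_coname_dual_ext
    cases hr with | ext _ hnd hall =>
    obtain rfl := eq_of_mem_of_nodup hnd ht hr'
    exact ⟨t, hall _ ht, by rw [hρ.past_eq_bfun], by rw [hσ.past_eq_bfun]⟩
  | comR hρ hσ _ =>
    obtain ⟨c, br, rfl, hr'⟩ := hρ.exists_of_coname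
    obtain ⟨t, ht, rfl⟩ := hσ.exists_of_name_dual_int
    cases hr with | int _ hnd hall =>
    obtain rfl := eq_of_mem_of_nodup hnd ht hr'
    exact ⟨t, hall _ ht, by rw [hρ.past_eq_bfun], by rw [hσ.past_eq_bfun]⟩

def IsDualPair (p q : Config) : Prop :=
  ∃ δ r, r.WF ∧ (∀ d ∈ δ, d.Ckpt ∧ d.WF) ∧ p = (δ, r) ∧ q = (δ.map dual, r.dual)

theorem isDualPair_bfun {δ : Option SB} {r r' : SB} (hr : r.WF) (hδ : ∀ d ∈ δ, d.Ckpt ∧ d.WF)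
    (hr' : r'.WF) : IsDualPair (bfun δ r, r') ((bfun δ r).map dual, r'.dual) := by
  refine ⟨_, r', hr', ?_, rfl, rfl⟩
  unfold bfun
  split_ifs with hck
  · rintro d ⟨⟩
    exact ⟨hck, hr⟩
  · exact hδ

theorem IsDualPair.hfun {p q : Config} (h : IsDualPair p q) : Hfun IsDualPair p q := by
  obtain ⟨δ, r, hr, hδ, rfl, rfl⟩ := h
  refine ⟨fun hstuck => ⟨?_, ?_⟩, ?_⟩
  · by_contra hne
    exact hstuck (PStep.exists_tau_dual hr hne _ _)
  · cases δ with
    | none => exact .inl ⟨rfl, rfl⟩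
    | some d =>
      obtain ⟨hck, -⟩ := hδ d rfl
      exact .inr ⟨d, d.dual, rfl, rfl, hck, hck.dual⟩
  · rintro (_ | _) p' q' hstep
    · obtain ⟨r', hr', rfl, rfl⟩ := PStep.exists_of_tau_dual hr hstep
      rw [bfun_dual]
      exact isDualPair_bfun hr hδ hr'
    · cases hstep
      obtain ⟨-, hd⟩ := hδ _ rfl
      exact ⟨none, _, hd, by simp, rfl, rfl⟩

/-- every (well-formed, recursion-free) behaviour is checkpoint
compliant with its dual. -/
theorem compl_dual (ρ : SB) (h : SB.WF ρ) :
    CkptCompl (none, ρ) (none, ρ.dual) :=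
  ⟨IsDualPair, fun _ _ => IsDualPair.hfun, none, ρ, h, by simp, rfl, rfl⟩
end

section
/- Checkpoint compliance is conservative over standard compliance: if ⟨∘⟩ρ ⊣▲ ⟨∘⟩σ then erase(ρ) ⊣ erase(σ), where ⊣ is the standard compliance of checkpoint-free session behaviours. -/
/-! A standard run of `ρ.toPB ∥ σ.toPB` is simulated by τ-steps of checkpointed
configurations, and rollback is never needed. The silent commitment of an internal
choice to a branch has no checkpointed counterpart, so the simulation only remembers
the chosen branch; the synchronisation that follows is a τ-step of the checkpointed pair,
enabled because compliance forces `oplusacts ⊆ sumacts`. In a stuck standard state the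
client is `1`, since any other client would give compliance a τ-step, and that τ-step
yields a standard move. -/

namespace SB

lemma toPB_one : SB.one.toPB = PB.one := by rw [SB.toPB]

lemma toPB_ext (c : Bool) (br : List (ℕ × SB)) :
    (SB.ext c br).toPB = PB.ext (br.map fun p => (p.1, p.2.toPB)) := by
  rw [SB.toPB]; congr 1; exact List.attach_map_val (l := br) (f := fun p => (p.1, p.2.toPB))

lemma toPB_int (c : Bool) (br : List (ℕ × SB)) :
    (SB.int c br).toPB = PB.int (br.map fun p => (p.1, p.2.toPB)) := by
  rw [SB.toPB]; congr 1; exact List.attach_map_val (l := br) (f := fun p => (p.1, p.2.toPB))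

lemma mem_map_toPB {a : ℕ} {t : PB} {br : List (ℕ × SB)} :
    (a, t) ∈ br.map (fun p => (p.1, p.2.toPB)) ↔ ∃ s, (a, s) ∈ br ∧ s.toPB = t := by
  simp

lemma exists_mem_of_oplusacts_subset {c₁ c₂ : Bool} {brρ brσ : List (ℕ × SB)} {a : ℕ} {s : SB}
    (hsub : (SB.int c₂ brσ).oplusacts ⊆ (SB.ext c₁ brρ).sumacts) (hs : (a, s) ∈ brσ) :
    ∃ r, (a, r) ∈ brρ := by
  have ha : a ∈ (SB.int c₂ brσ).oplusacts := by
    simpa [SB.oplusacts] using ⟨s, hs⟩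
  simpa [SB.sumacts] using hsub ha

end SB

namespace Step

lemma exists_of_mem_ext {δ : Option SB} {c : Bool} {br : List (ℕ × SB)} {a : ℕ} {s : SB}
    (h : (a, s) ∈ br) : ∃ δ', Step δ (.ext c br) (.name a) δ' s := by
  cases c
  · exact ⟨δ, .ext h⟩
  · exact ⟨_, .ckExt h⟩

lemma exists_of_mem_int {δ : Option SB} {c : Bool} {br : List (ℕ × SB)} {a : ℕ} {s : SB}
    (h : (a, s) ∈ br) : ∃ δ', Step δ (.int c br) (.coname a) δ' s := by
  cases c
  · exact ⟨δ, .int h⟩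
  · exact ⟨_, .ckInt h⟩

lemma name_inv {δ δ' : Option SB} {s s' : SB} {a : ℕ} (h : Step δ s (.name a) δ' s') :
    ∃ c br, s = .ext c br ∧ (a, s') ∈ br := by
  cases h <;> exact ⟨_, _, rfl, by assumption⟩

lemma coname_inv {δ δ' : Option SB} {s s' : SB} {a : ℕ} (h : Step δ s (.coname a) δ' s') :
    ∃ c br, s = .int c br ∧ (a, s') ∈ br := by
  cases h <;> exact ⟨_, _, rfl, by assumption⟩

end Step

namespace CkCompl

lemma of_pstep {p q p' q' : Config} {β : PLab} (h : CkCompl p q) (hs : PStep p q β p' q') :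
    CkCompl p' q' := by
  obtain ⟨R, hR, hpq⟩ := h
  exact ⟨R, hR, (hR _ _ hpq).2 _ _ _ hs⟩

lemma exists_tau {p q : Config} (h : CkCompl p q) (hp : p.2 ≠ .one) :
    ∃ p' q', PStep p q .tau p' q' := by
  obtain ⟨R, hR, hpq⟩ := h
  by_contra hstuck
  exact hp ((hR _ _ hpq).1 hstuck).1

lemma int_left {δ γ : Option SB} {c : Bool} {br : List (ℕ × SB)} {q : SB}
    (h : CkCompl (δ, .int c br) (γ, q)) :
    br ≠ [] ∧ ∃ c' br', q = .ext c' br' ∧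
      (SB.int c br).oplusacts ⊆ (SB.ext c' br').sumacts := by
  obtain ⟨p', q', hs⟩ := h.exists_tau (by simp)
  cases hs with
  | comL hρ _ _ => obtain ⟨_, _, h, _⟩ := hρ.name_inv; cases h
  | comR hρ hσ hsub =>
    obtain ⟨_, _, hρeq, hm⟩ := hρ.coname_inv
    cases hρeq
    obtain ⟨c', br', rfl, _⟩ := hσ.name_inv
    exact ⟨List.ne_nil_of_mem hm, c', br', rfl, hsub⟩

lemma ext_left {δ γ : Option SB} {c : Bool} {br : List (ℕ × SB)} {q : SB}
    (h : CkCompl (δ, .ext c br) (γ, q)) :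
    ∃ c' br', q = .int c' br' ∧ br' ≠ [] ∧
      (SB.int c' br').oplusacts ⊆ (SB.ext c br).sumacts := by
  obtain ⟨p', q', hs⟩ := h.exists_tau (by simp)
  cases hs with
  | comL _ hσ hsub =>
    obtain ⟨c', br', rfl, hm⟩ := hσ.coname_inv
    exact ⟨c', br', rfl, List.ne_nil_of_mem hm, hsub⟩
  | comR hρ _ _ => obtain ⟨_, _, h, _⟩ := hρ.coname_inv; cases h

end CkCompl

/-- `committed` is the standard state reached from the erasure of an internal choice
after it silently commits to a branch; the checkpointed side has not moved yet. -/
inductive Erasure : PB → SB → Prop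
  | toPB (s : SB) : Erasure s.toPB s
  | committed {c : Bool} {br : List (ℕ × SB)} {a : ℕ} {r : SB} :
      (a, r) ∈ br → Erasure (.pre a r.toPB) (.int c br)

namespace Erasure

lemma ext_inv {x : PB} {p : SB} {br' : List (ℕ × PB)} (h : Erasure x p) (hx : x = .ext br') :
    ∃ c br, p = .ext c br ∧ br' = br.map fun p => (p.1, p.2.toPB) := by
  cases h with
  | toPB => cases p <;> simp_all [SB.toPB_one, SB.toPB_ext, SB.toPB_int]
  | committed => cases hx

lemma int_inv {x : PB} {p : SB} {br' : List (ℕ × PB)} (h : Erasure x p) (hx : x = .int br') :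
    ∃ c br, p = .int c br ∧ br' = br.map fun p => (p.1, p.2.toPB) := by
  cases h with
  | toPB => cases p <;> simp_all [SB.toPB_one, SB.toPB_ext, SB.toPB_int]
  | committed => cases hx

lemma pre_inv {x : PB} {p : SB} {a : ℕ} {t : PB} (h : Erasure x p) (hx : x = .pre a t) :
    ∃ c br, p = .int c br ∧ ∃ r, (a, r) ∈ br ∧ t = r.toPB := by
  cases h with
  | toPB => cases p <;> simp_all [SB.toPB_one, SB.toPB_ext, SB.toPB_int]
  | committed hm => cases hx; exact ⟨_, _, rfl, _, hm, rfl⟩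

lemma eq_toPB_of_ext {x : PB} {c : Bool} {br : List (ℕ × SB)} (h : Erasure x (.ext c br)) :
    x = (SB.ext c br).toPB := by
  cases h; rfl

end Erasure

def Simulated (st : PB × PB) : Prop :=
  ∃ δ p γ q, CkCompl (δ, p) (γ, q) ∧ Erasure st.1 p ∧ Erasure st.2 q

namespace Simulated

lemma sred {st st' : PB × PB} (h : Simulated st) (hs : SRed st st') : Simulated st' := by
  obtain ⟨δ, p, γ, q, hc, hx, hy⟩ := h
  cases hs with
  | intL hm =>
    obtain ⟨c, br, rfl, rfl⟩ := hx.int_inv rfl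
    obtain ⟨s, hs, rfl⟩ := SB.mem_map_toPB.1 hm
    exact ⟨δ, _, γ, q, hc, .committed hs, hy⟩
  | intR hm =>
    obtain ⟨c, br, rfl, rfl⟩ := hy.int_inv rfl
    obtain ⟨s, hs, rfl⟩ := SB.mem_map_toPB.1 hm
    exact ⟨δ, p, γ, _, hc, hx, .committed hs⟩
  | comL hm =>
    obtain ⟨c₁, brρ, rfl, rfl⟩ := hx.ext_inv rfl
    obtain ⟨c₂, brσ, rfl, -, hsub⟩ := hc.ext_left
    obtain ⟨_, _, ⟨⟩, s, hs, rfl⟩ := hy.pre_inv rfl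
    obtain ⟨r, hr, rfl⟩ := SB.mem_map_toPB.1 hm
    obtain ⟨δ', hρ⟩ := Step.exists_of_mem_ext (δ := δ) (c := c₁) hr
    obtain ⟨γ', hσ⟩ := Step.exists_of_mem_int (δ := γ) (c := c₂) hs
    exact ⟨δ', r, γ', s, hc.of_pstep (.comL hρ hσ hsub), .toPB r, .toPB s⟩
  | comR hm =>
    obtain ⟨c₁, brρ, rfl, r, hr, rfl⟩ := hx.pre_inv rfl
    obtain ⟨-, c₂, brσ, rfl, hsub⟩ := hc.int_left
    obtain ⟨_, _, ⟨⟩, rfl⟩ := hy.ext_inv rfl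
    obtain ⟨s, hs, rfl⟩ := SB.mem_map_toPB.1 hm
    obtain ⟨δ', hρ⟩ := Step.exists_of_mem_int (δ := δ) (c := c₁) hr
    obtain ⟨γ', hσ⟩ := Step.exists_of_mem_ext (δ := γ) (c := c₂) hs
    exact ⟨δ', r, γ', s, hc.of_pstep (.comR hρ hσ hsub), .toPB r, .toPB s⟩

lemma fst_eq_one_of_stuck {st : PB × PB} (h : Simulated st) (hstuck : StdStuck st) :
    st.1 = .one := by
  obtain ⟨x, y⟩ := st
  obtain ⟨δ, p, γ, q, hc, hx, hy⟩ := h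
  dsimp only at hx hy ⊢
  refine by_contra fun hne => hstuck ?_
  cases hx with
  | committed hr =>
    obtain ⟨-, c', br', rfl, hsub⟩ := hc.int_left
    obtain ⟨s, hs⟩ := SB.exists_mem_of_oplusacts_subset hsub hr
    rw [hy.eq_toPB_of_ext, SB.toPB_ext]
    exact ⟨_, .comR (SB.mem_map_toPB.2 ⟨s, hs, rfl⟩)⟩
  | toPB p =>
    cases p with
    | one => exact (hne SB.toPB_one).elim
    | int c br =>
      obtain ⟨hbr, -⟩ := hc.int_left
      obtain ⟨⟨a, r⟩, hr⟩ := List.exists_mem_of_ne_nil br hbr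
      rw [SB.toPB_int]
      exact ⟨_, .intL (SB.mem_map_toPB.2 ⟨r, hr, rfl⟩)⟩
    | ext c br =>
      obtain ⟨c', br', rfl, hbr', hsub⟩ := hc.ext_left
      rw [SB.toPB_ext]
      cases hy with
      | toPB =>
        obtain ⟨⟨a, s⟩, hs⟩ := List.exists_mem_of_ne_nil br' hbr'
        rw [SB.toPB_int]
        exact ⟨_, .intR (SB.mem_map_toPB.2 ⟨s, hs, rfl⟩)⟩
      | committed hs =>
        obtain ⟨r, hr⟩ := SB.exists_mem_of_oplusacts_subset hsub hs
        exact ⟨_, .comL (SB.mem_map_toPB.2 ⟨r, hr, rfl⟩)⟩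

end Simulated

/-- checkpoint compliance is conservative over standard compliance. -/
theorem compl_conservative (ρ σ : SB)
    (h : CkCompl (none, ρ) (none, σ)) : StdCompl ρ.toPB σ.toPB := by
  intro st hred
  have hsim : Simulated st := by
    induction hred with
    | refl => exact ⟨none, ρ, none, σ, h, .toPB ρ, .toPB σ⟩
    | tail _ hs ih => exact ih.sred hs
  exact hsim.fst_eq_one_of_stuck
end
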